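/- Active-switch exclusivity: if the replication protocol only accepts single-replica reads stamped with switch ID equal to the current active switch, the active switch ID only ever increases, and a switch with ID s only sends writes after all replicas agree to reject single-replica reads from switches with ID < s, then no single-replica read from a non-active switch is ever served after a write from a higher-ID switch has been processed. -/

import Mathlib

inductive FEvent
  | write (sid : ℕ)     -- write tagged with a switch ID
  | read (sid : ℕ)      -- single-replica read tagged with a switch ID
  | failover            -- increments the active switch ID
deriving DecidableEq

/-- The active switch ID just before processing event `i` of the trace:
initially 1, incremented by each failover. -/
def activeAt (tr : List FEvent) (i : ℕ) : ℕ :=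
  1 + (tr.take i).countP (fun e => e = FEvent.failover)

theorem activeAt_mono (tr : List FEvent) : Monotone (activeAt tr) := fun _ _ hij =>
  Nat.add_le_add_left ((List.take_prefix_take_left hij).sublist.countP_le) 1

/-- Active-switch exclusivity. If single-replica reads are served
only when their switch ID equals the current active switch ID, the active
switch ID only increases (it is 1 plus the number of failovers so far), and a
write tagged with switch ID `s'` occurs only when the active switch ID is ≥ s'
(all replicas having agreed to reject reads from switches with smaller IDs),
then no single-replica read tagged with a smaller switch ID than some earlier
write's switch ID is ever served: its tag cannot equal the active switch ID at
serving time. -/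
theorem harmonia_active_switch_exclusivity
    (tr : List FEvent)
    (hwrite : ∀ i s', tr[i]? = some (FEvent.write s') → s' ≤ activeAt tr i) :
    ∀ i j s s', i < j →
      tr[i]? = some (FEvent.write s') →
      tr[j]? = some (FEvent.read s) →
      s < s' →
      s ≠ activeAt tr j := by
  intro i j s s' hij hw _ hlt
  refine Nat.ne_of_lt ?_
  calc s < s' := hlt
    _ ≤ activeAt tr i := hwrite i s' hw
    _ ≤ activeAt tr j := activeAt_mono tr hij.le
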